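/- arXiv:2101.06366 — 3 statements merged into one kernel-verified Lean document; each statement's English description precedes it below -/
import Mathlib

section
/- Let {X_{k,n} : k,n ≥ 1} be a double array of independent φ-subgaussian random variables with sup_{k,n ∈ ℕ} τ_φ(X_{k,n}) ≤ 1. Let κ be a positive increasing differentiable function on (0,∞) whose derivative r = κ′ is non-decreasing for x > 0, and suppose ψ(x) − κ(x) ≥ C₀(x) for all x > 0 for some function C₀. Assume there exists C > 0 such that for every k,n ≥ 1 and all x > 0, P(X_{k,n} < x) ≤ exp(−C exp(−κ(x))). Suppose there exist constants A > 0 and ε₀ > 0 such that for every ε ∈ (0, ε₀]: (a) ∫_A^∞ exp(−(C y / 2) exp(−κ(ψ^{−1}(ln y) − ε))) dy < +∞, and (b) ∫_A^∞ ψ(y) q_φ(y) exp(ψ(y) − (C/2) exp(C₀(y) + ε r(y − ε))) dy < +∞. Then (max_{1 ≤ k ≤ m, 1 ≤ n ≤ j} X_{k,n} − ψ^{−1}(ln(mj)))⁻ → 0 almost surely as m ∨ j → ∞, where u⁻ = max(−u, 0). -/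
/-!
Put `v s = ψ⁻¹(s ln 2)`. Independence and the left-tail bound give
`P(max_{k ≤ 2^a, n ≤ 2^b} X_{k,n} < v(a+b) - ε) ≤ exp(-C 2^{a+b} e^{-κ(v(a+b) - ε)})`.
On the block `(v s, v(s+1)]` the density `q` integrates to `ψ(v(s+1)) - ψ(v s) = ln 2`, and the
mean value theorem for `κ` (whose derivative `r` is non-decreasing) compares `s + 1` times this
probability with the integral of condition (b) over the block. Hence the probabilities are summable
over all pairs `(a, b)`, and by Borel–Cantelli, almost surely `max ≥ v(a+b) - ε` for all but
finitely many pairs. A general `(m, j)` is compared with `(2^a, 2^b)`, `a = ⌊log₂ m⌋`,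
`b = ⌊log₂ j⌋`: the maximum can only be larger, `ψ⁻¹(ln(mj)) ≤ v(a+b+2)`, and
`v(s+2) - v(s) ≤ 2 ln 2 / q(v s) → 0` because the superlinearity of `ψ` forces `q → ∞`.
-/


open MeasureTheory Real Filter Set

/-- An Orlicz N-function: continuous, even, convex, vanishing at `0`, monotone
increasing on `[0, ∞)`, with `φ x / x → 0` as `x → 0⁺` and `φ x / x → ∞` as `x → ∞`. -/
structure IsOrliczN (φ : ℝ → ℝ) : Prop where
  continuous : Continuous φ
  even : ∀ x, φ (-x) = φ x
  convexOn : ConvexOn ℝ Set.univ φ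
  map_zero : φ 0 = 0
  strictMonoOn : StrictMonoOn φ (Set.Ici 0)
  tendsto_zero : Tendsto (fun x => φ x / x) (nhdsWithin 0 (Set.Ioi 0)) (nhds 0)
  tendsto_atTop : Tendsto (fun x => φ x / x) atTop atTop

/-- `ψ` is the Young–Fenchel transform of `φ`: `ψ x = sup_{y ∈ ℝ} (x * y - φ y)`. -/
def IsYoungFenchel (φ ψ : ℝ → ℝ) : Prop :=
  ∀ x, IsLUB {z | ∃ y, z = x * y - φ y} (ψ x)

/-- The moment generating function bound `E exp(t X) ≤ exp (φ (a t))` with constant `a > 0`. -/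
def PhiMGF (φ : ℝ → ℝ) {Ω : Type*} [MeasurableSpace Ω] (P : Measure Ω) (X : Ω → ℝ)
    (a : ℝ) : Prop :=
  0 < a ∧ ∀ t : ℝ, Integrable (fun ω => Real.exp (t * X ω)) P ∧
    ∫ ω, Real.exp (t * X ω) ∂P ≤ Real.exp (φ (a * t))

/-- `X` is a `φ`-subgaussian random variable: centered, with an MGF bound. -/
def IsPhiSubGaussian (φ : ℝ → ℝ) {Ω : Type*} [MeasurableSpace Ω] (P : Measure Ω)
    (X : Ω → ℝ) : Prop :=
  Integrable X P ∧ (∫ ω, X ω ∂P) = 0 ∧ ∃ a, PhiMGF φ P X a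

/-- The `φ`-subgaussian norm `τ_φ(X)`. -/
noncomputable def tauPhi (φ : ℝ → ℝ) {Ω : Type*} [MeasurableSpace Ω] (P : Measure Ω)
    (X : Ω → ℝ) : ℝ :=
  sInf {a | PhiMGF φ P X a}

/-- `max_{1 ≤ k ≤ m, 1 ≤ n ≤ j} X_{k,n}(ω)`. -/
noncomputable def runMax {Ω : Type*} (X : ℕ → ℕ → Ω → ℝ) (m j : ℕ) (ω : Ω) : ℝ :=
  sSup {y | ∃ k n, 1 ≤ k ∧ k ≤ m ∧ 1 ≤ n ∧ n ≤ j ∧ y = X k n ω}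

/-- Convergence of a double array `b m j` to `l` as `m ∨ j → ∞`. -/
def TendstoMaxIdx (b : ℕ → ℕ → ℝ) (l : ℝ) : Prop :=
  ∀ ε > 0, ∃ N : ℕ, ∀ m j : ℕ, 1 ≤ m → 1 ≤ j → N ≤ max m j → |b m j - l| < ε

open scoped ENNReal Topology

theorem ENNReal.tsum_ne_top_of_eventually_le {ι : Type*} {f g : ι → ℝ≥0∞} (hf : ∀ i, f i ≠ ∞)
    (hfg : ∀ᶠ i in cofinite, f i ≤ g i) (hg : ∑' i, g i ≠ ∞) : ∑' i, f i ≠ ∞ := by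
  set s := {i | ¬f i ≤ g i}
  have hs : s.Finite := hfg
  have hle : ∀ i, f i ≤ g i + s.indicator f i := fun i => by
    by_cases hi : i ∈ s
    · simp [indicator_of_mem hi]
    · exact (not_not.1 hi).trans le_self_add
  have hfin : ∑' i, s.indicator f i ≠ ∞ := by
    have := hs.fintype
    rw [← tsum_subtype, tsum_fintype]
    exact ENNReal.sum_ne_top.2 fun i _ => hf i
  exact ne_top_of_le_ne_top (ENNReal.add_ne_top.2 ⟨hg, hfin⟩)
    ((ENNReal.tsum_le_tsum hle).trans_eq ENNReal.tsum_add)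

theorem ENNReal.tsum_prod_add_eq_tsum_succ_mul (G : ℕ → ℝ≥0∞) :
    ∑' p : ℕ × ℕ, G (p.1 + p.2) = ∑' n : ℕ, ((n : ℝ≥0∞) + 1) * G n := by
  rw [← (Finset.HasAntidiagonal.sigmaAntidiagonalEquivProd (A := ℕ)).tsum_eq, ENNReal.tsum_sigma']
  refine tsum_congr fun n => ?_
  have hG : ∀ p : Finset.HasAntidiagonal.antidiagonal n,
      G ((Finset.HasAntidiagonal.sigmaAntidiagonalEquivProd ⟨n, p⟩).1 +
        (Finset.HasAntidiagonal.sigmaAntidiagonalEquivProd ⟨n, p⟩).2) = G n :=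
    fun p => congrArg G (Finset.HasAntidiagonal.mem_antidiagonal.1 p.2)
  rw [tsum_congr hG, ENNReal.tsum_const, ENat.card_eq_coe_fintype_card]
  simp

theorem Nat.tendsto_add_cofinite_atTop :
    Tendsto (fun p : ℕ × ℕ => p.1 + p.2) cofinite atTop := by
  refine tendsto_atTop.2 fun N => eventually_cofinite.2 <|
    ((finite_Iio N).prod (finite_Iio N)).subset fun p hp => ?_
  have hp : p.1 + p.2 < N := not_le.1 hp
  exact ⟨show p.1 < N by omega, show p.2 < N by omega⟩

theorem Nat.tendsto_log_atTop {b : ℕ} (hb : 1 < b) : Tendsto (Nat.log b) atTop atTop :=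
  tendsto_atTop_atTop_of_monotone (fun _ _ h => Nat.log_mono_right h)
    fun n => ⟨b ^ n, (Nat.log_pow hb n).ge⟩

theorem Nat.tendsto_prodMap_log_cofinite {b : ℕ} (hb : 1 < b) :
    Tendsto (Prod.map (Nat.log b) (Nat.log b)) cofinite cofinite := by
  rw [← coprod_cofinite, Nat.cofinite_eq_atTop]
  exact (Nat.tendsto_log_atTop hb).prodMap_coprod (Nat.tendsto_log_atTop hb)

theorem tendstoMaxIdx_of_eventually_cofinite {b : ℕ → ℕ → ℝ} {l : ℝ}
    (h : ∀ ε > 0, ∀ᶠ p : ℕ × ℕ in cofinite, 1 ≤ p.1 → 1 ≤ p.2 → |b p.1 p.2 - l| < ε) :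
    TendstoMaxIdx b l := by
  intro ε hε
  obtain ⟨N, hN⟩ := ((eventually_cofinite.1 (h ε hε)).image fun p => max p.1 p.2).bddAbove
  refine ⟨N + 1, fun m j hm hj hmj => ?_⟩
  by_contra hbad
  have : max m j ≤ N := hN ⟨(m, j), fun hb => hbad (hb hm hj), rfl⟩
  omega

theorem tsum_ne_top_of_le_setLIntegral_Ioc {v : ℕ → ℝ} (hv : Monotone v) {f : ℕ → ℝ≥0∞}
    {F : ℝ → ℝ≥0∞} {A : ℝ} {K : ℝ≥0∞} (hK : K ≠ ∞) (hf : ∀ t, f t ≠ ∞)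
    (hfF : ∀ᶠ t in atTop, f t ≤ K * ∫⁻ y in Ioc (v t) (v (t + 1)), F y)
    (hA : ∀ᶠ t in atTop, A ≤ v t) (hF : ∫⁻ y in Ioi A, F y ≠ ∞) : ∑' t, f t ≠ ∞ := by
  set s : ℕ → Set ℝ := fun t => Ioi A ∩ Ioc (v t) (v (t + 1))
  have hdisj : Pairwise (Function.onFun Disjoint s) := fun i j hij =>
    (hv.pairwise_disjoint_on_Ioc_succ hij).mono inter_subset_right inter_subset_right
  have hsum : ∑' t, ∫⁻ y in s t, F y ≤ ∫⁻ y in Ioi A, F y := by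
    rw [← lintegral_iUnion (fun t => measurableSet_Ioi.inter measurableSet_Ioc) hdisj]
    exact lintegral_mono_set (iUnion_subset fun t => inter_subset_left)
  refine ENNReal.tsum_ne_top_of_eventually_le hf (g := fun t => K * ∫⁻ y in s t, F y) ?_ ?_
  · rw [Nat.cofinite_eq_atTop]
    filter_upwards [hfF, hA] with t ht hAt
    rwa [show s t = Ioc (v t) (v (t + 1)) from
      inter_eq_right.2 fun y hy => hAt.trans_lt hy.1]
  · rw [ENNReal.tsum_mul_left]
    exact ENNReal.mul_ne_top hK (ne_top_of_le_ne_top hF hsum)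

theorem MonotoneOn.intervalIntegrable_of_Ici {q : ℝ → ℝ} {c a b : ℝ}
    (hq : MonotoneOn q (Ici c)) (ha : c ≤ a) (hab : a ≤ b) :
    IntervalIntegrable q volume a b :=
  (hq.mono fun _ ht => ha.trans (uIcc_of_le hab ▸ ht).1).intervalIntegrable

section Primitive

variable {ψ q : ℝ → ℝ}

theorem primitive_sub_eq_integral (hq : MonotoneOn q (Ici 0))
    (hψ : ∀ x, 0 ≤ x → ψ x = ∫ t in (0 : ℝ)..x, q t) {a b : ℝ} (ha : 0 ≤ a) (hab : a ≤ b) :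
    ψ b - ψ a = ∫ t in a..b, q t := by
  rw [hψ b (ha.trans hab), hψ a ha, intervalIntegral.integral_interval_sub_left
    (hq.intervalIntegrable_of_Ici le_rfl (ha.trans hab)) (hq.intervalIntegrable_of_Ici le_rfl ha)]

theorem mul_le_primitive_sub (hq : MonotoneOn q (Ici 0))
    (hψ : ∀ x, 0 ≤ x → ψ x = ∫ t in (0 : ℝ)..x, q t) {a b : ℝ} (ha : 0 ≤ a) (hab : a ≤ b) :
    (b - a) * q a ≤ ψ b - ψ a := by
  rw [primitive_sub_eq_integral hq hψ ha hab, ← smul_eq_mul, ← intervalIntegral.integral_const]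
  exact intervalIntegral.integral_mono_on hab intervalIntegrable_const
    (hq.intervalIntegrable_of_Ici ha hab) fun t ht => hq ha (ha.trans ht.1) ht.1

theorem primitive_sub_le_mul (hq : MonotoneOn q (Ici 0))
    (hψ : ∀ x, 0 ≤ x → ψ x = ∫ t in (0 : ℝ)..x, q t) {a b : ℝ} (ha : 0 ≤ a) (hab : a ≤ b) :
    ψ b - ψ a ≤ (b - a) * q b := by
  rw [primitive_sub_eq_integral hq hψ ha hab, ← smul_eq_mul, ← intervalIntegral.integral_const]
  exact intervalIntegral.integral_mono_on hab (hq.intervalIntegrable_of_Ici ha hab)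
    intervalIntegrable_const fun t ht => hq (ha.trans ht.1) (ha.trans hab) ht.2

theorem lintegral_Ioc_ofReal_eq_primitive_sub (hq : MonotoneOn q (Ici 0))
    (hψ : ∀ x, 0 ≤ x → ψ x = ∫ t in (0 : ℝ)..x, q t) (hq₀ : ∀ x, 0 ≤ x → 0 ≤ q x) {a b : ℝ}
    (ha : 0 ≤ a) (hab : a ≤ b) :
    ∫⁻ t in Ioc a b, ENNReal.ofReal (q t) = ENNReal.ofReal (ψ b - ψ a) := by
  have hint :=
    (intervalIntegrable_iff_integrableOn_Ioc_of_le hab).1 (hq.intervalIntegrable_of_Ici ha hab)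
  rw [primitive_sub_eq_integral hq hψ ha hab, intervalIntegral.integral_of_le hab,
    ofReal_integral_eq_lintegral_ofReal hint]
  exact (ae_restrict_mem measurableSet_Ioc).mono fun t ht => hq₀ t (ha.trans ht.1.le)

theorem monotoneOn_primitive (hq : MonotoneOn q (Ici 0))
    (hψ : ∀ x, 0 ≤ x → ψ x = ∫ t in (0 : ℝ)..x, q t) (hq₀ : ∀ x, 0 ≤ x → 0 ≤ q x) :
    MonotoneOn ψ (Ici 0) :=
  fun a ha _ _ hab => sub_nonneg.1 <|
    (mul_nonneg (sub_nonneg.2 hab) (hq₀ a ha)).trans (mul_le_primitive_sub hq hψ ha hab)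

theorem tendsto_atTop_of_le_primitive (hq : MonotoneOn q (Ici 0))
    (hψ : ∀ x, 0 ≤ x → ψ x = ∫ t in (0 : ℝ)..x, q t) {φ : ℝ → ℝ}
    (hφψ : ∀ x y, x * y - φ y ≤ ψ x) : Tendsto q atTop atTop := by
  have hψ0 : ψ 0 = 0 := by simp [hψ 0 le_rfl]
  refine tendsto_atTop.2 fun M => ?_
  set x := |φ (M + 1)| + 1
  have hx : 0 < x := by positivity
  have hqx : M ≤ q x := by
    have h1 := primitive_sub_le_mul hq hψ le_rfl hx.le
    have h2 := hφψ x (M + 1)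
    rw [hψ0, sub_zero, sub_zero] at h1
    have h3 := le_abs_self (φ (M + 1))
    nlinarith
  exact eventually_atTop.2 ⟨x, fun y hy => hqx.trans (hq hx.le (hx.le.trans hy) hy)⟩

end Primitive

section RightInverse

variable {ψ ψinv : ℝ → ℝ}

theorem monotoneOn_of_rightInvOn (hψ : MonotoneOn ψ (Ici 0))
    (hinv : ∀ x, 0 ≤ x → 0 ≤ ψinv x ∧ ψ (ψinv x) = x) : MonotoneOn ψinv (Ici 0) := by
  intro x hx y hy hxy
  by_contra! hlt
  have := hψ (hinv y hy).1 (hinv x hx).1 hlt.le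
  rw [(hinv x hx).2, (hinv y hy).2] at this
  obtain rfl := le_antisymm hxy this
  exact lt_irrefl _ hlt

theorem tendsto_atTop_of_rightInvOn (hψ : MonotoneOn ψ (Ici 0))
    (hinv : ∀ x, 0 ≤ x → 0 ≤ ψinv x ∧ ψ (ψinv x) = x) : Tendsto ψinv atTop atTop := by
  refine tendsto_atTop.2 fun T => ?_
  filter_upwards [eventually_ge_atTop 0, eventually_gt_atTop (ψ (max T 0))] with x hx0 hx
  by_contra! hlt
  have := hψ (hinv x hx0).1 (le_max_right T 0) (hlt.le.trans (le_max_left T 0))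
  rw [(hinv x hx0).2] at this
  linarith

theorem tendsto_rightInvOn_add_sub (hψ : MonotoneOn ψ (Ici 0))
    (hinv : ∀ x, 0 ≤ x → 0 ≤ ψinv x ∧ ψ (ψinv x) = x) {q : ℝ → ℝ} (hq : Tendsto q atTop atTop)
    (hgap : ∀ a b, 0 ≤ a → a ≤ b → (b - a) * q a ≤ ψ b - ψ a) {c : ℝ} (hc : 0 ≤ c) :
    Tendsto (fun x => ψinv (x + c) - ψinv x) atTop (𝓝 0) := by
  have hqψinv := hq.comp (tendsto_atTop_of_rightInvOn hψ hinv)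
  refine tendsto_of_tendsto_of_tendsto_of_le_of_le' tendsto_const_nhds
    ((tendsto_const_nhds (x := c)).div_atTop hqψinv) ?_ ?_
  · filter_upwards [eventually_ge_atTop 0] with x hx
    exact sub_nonneg.2
      (monotoneOn_of_rightInvOn hψ hinv hx (show 0 ≤ x + c by linarith) (by linarith))
  · filter_upwards [eventually_ge_atTop 0, hqψinv.eventually_gt_atTop 0] with x hx hqx
    have hle := monotoneOn_of_rightInvOn hψ hinv hx (show 0 ≤ x + c by linarith)
      (by linarith)
    have := hgap _ _ (hinv x hx).1 hle
    rw [(hinv x hx).2, (hinv _ (by linarith)).2, add_sub_cancel_left] at this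
    exact (le_div_iff₀ hqx).2 this

end RightInverse

theorem mul_le_sub_of_hasDerivAt_of_monotoneOn {κ r : ℝ → ℝ}
    (hκ : ∀ x, 0 < x → HasDerivAt κ (r x) x) (hr : MonotoneOn r (Ioi 0)) {ε y : ℝ}
    (hε : 0 ≤ ε) (hy : 0 < y - ε) : ε * r (y - ε) ≤ κ y - κ (y - ε) := by
  have hD : ∀ x ∈ Ici (y - ε), 0 < x := fun x hx => hy.trans_le hx
  have key := (convex_Ici (y - ε)).mul_sub_le_image_sub_of_le_deriv
    (fun x hx => (hκ x (hD x hx)).continuousAt.continuousWithinAt)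
    (fun x hx => (hκ x (hD x (interior_subset hx))).differentiableAt.differentiableWithinAt)
    (C := r (y - ε)) (fun x hx => by
      rw [interior_Ici] at hx
      rw [(hκ x (hy.trans hx)).deriv]
      exact hr hy (hy.trans hx) hx.le)
    (y - ε) self_mem_Ici y (by simp [hε]) (by linarith)
  simpa [mul_comm] using key

section RunMax

variable {Ω : Type*} {X : ℕ → ℕ → Ω → ℝ}

theorem bddAbove_runMax_set (m j : ℕ) (ω : Ω) :
    BddAbove {y | ∃ k n, 1 ≤ k ∧ k ≤ m ∧ 1 ≤ n ∧ n ≤ j ∧ y = X k n ω} := by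
  refine ((((finite_Icc 1 m).prod (finite_Icc 1 j)).image
    fun p : ℕ × ℕ => X p.1 p.2 ω).subset ?_).bddAbove
  rintro y ⟨k, n, h1, h2, h3, h4, rfl⟩
  exact ⟨(k, n), ⟨⟨h1, h2⟩, ⟨h3, h4⟩⟩, rfl⟩

theorem le_runMax {m j k n : ℕ} (hk : 1 ≤ k) (hkm : k ≤ m) (hn : 1 ≤ n) (hnj : n ≤ j)
    (ω : Ω) : X k n ω ≤ runMax X m j ω :=
  le_csSup (bddAbove_runMax_set m j ω) ⟨k, n, hk, hkm, hn, hnj, rfl⟩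

theorem runMax_mono {m j m' j' : ℕ} (hm' : 1 ≤ m') (hj' : 1 ≤ j') (hm : m' ≤ m) (hj : j' ≤ j)
    (ω : Ω) : runMax X m' j' ω ≤ runMax X m j ω := by
  refine csSup_le_csSup (bddAbove_runMax_set m j ω)
    ⟨X 1 1 ω, 1, 1, le_rfl, hm', le_rfl, hj', rfl⟩ ?_
  rintro y ⟨k, n, hk, hkm, hn, hnj, rfl⟩
  exact ⟨k, n, hk, hkm.trans hm, hn, hnj.trans hj, rfl⟩

theorem measure_runMax_lt_le [MeasurableSpace Ω] {P : Measure Ω}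
    (hindep : ProbabilityTheory.iIndepFun (fun p : ℕ × ℕ => X p.1 p.2) P) (m j : ℕ)
    {w : ℝ} {b : ℝ≥0∞}
    (hb : ∀ k n, 1 ≤ k → k ≤ m → 1 ≤ n → n ≤ j → P {ω | X k n ω < w} ≤ b) :
    P {ω | runMax X m j ω < w} ≤ b ^ (m * j) := by
  set S := Finset.Icc 1 m ×ˢ Finset.Icc 1 j
  have hsub : {ω | runMax X m j ω < w} ⊆ ⋂ p ∈ S, (fun p : ℕ × ℕ => X p.1 p.2) p ⁻¹' Iio w := by
    intro ω hω
    simp only [mem_iInter, mem_preimage, mem_Iio]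
    intro p hp
    simp only [S, Finset.mem_product, Finset.mem_Icc] at hp
    exact (le_runMax hp.1.1 hp.1.2 hp.2.1 hp.2.2 ω).trans_lt hω
  calc P {ω | runMax X m j ω < w}
      ≤ ∏ p ∈ S, P ((fun p : ℕ × ℕ => X p.1 p.2) p ⁻¹' Iio w) :=
        (measure_mono hsub).trans_eq
          (hindep.measure_inter_preimage_eq_mul S fun _ _ => measurableSet_Iio)
    _ ≤ ∏ _p ∈ S, b := Finset.prod_le_prod' fun p hp => by
        simp only [S, Finset.mem_product, Finset.mem_Icc] at hp
        exact hb p.1 p.2 hp.1.1 hp.1.2 hp.2.1 hp.2.2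
    _ = b ^ (m * j) := by simp [S]

end RunMax

theorem Real.exp_natCast_mul_log (n : ℕ) {x : ℝ} (hx : 0 < x) : exp (n * log x) = x ^ n := by
  rw [exp_nat_mul, exp_log hx]

theorem succ_mul_exp_le_of_mem_Ioc {ψ ψinv κ r C₀ : ℝ → ℝ} {C ε : ℝ}
    (hψ : MonotoneOn ψ (Ici 0)) (hinv : ∀ x, 0 ≤ x → 0 ≤ ψinv x ∧ ψ (ψinv x) = x)
    (hκ : MonotoneOn κ (Ioi 0)) (hκ' : ∀ x, 0 < x → HasDerivAt κ (r x) x)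
    (hr : MonotoneOn r (Ioi 0)) (hC₀ : ∀ x, 0 < x → C₀ x ≤ ψ x - κ x) (hC : 0 ≤ C)
    (hε : 0 ≤ ε) {t : ℕ} (ht : 1 ≤ t) (hεt : ε < ψinv (t * log 2)) {y : ℝ}
    (hy : y ∈ Ioc (ψinv (t * log 2)) (ψinv ((t + 1) * log 2))) :
    (t + 1) * exp (-(C * 2 ^ t * exp (-κ (ψinv (t * log 2) - ε)))) ≤
      2 / log 2 * (ψ y * exp (ψ y - C / 2 * exp (C₀ y + ε * r (y - ε)))) := by
  set v := ψinv (t * log 2)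
  have hlog2 : 0 < log 2 := log_pos one_lt_two
  have hv : 0 ≤ v := (hinv _ (by positivity)).1
  have hy0 : 0 < y := hε.trans_lt (hεt.trans hy.1)
  have hψv : ψ v = t * log 2 := (hinv _ (by positivity)).2
  have hψy_ge : t * log 2 ≤ ψ y := hψv ▸ hψ hv hy0.le hy.1.le
  have hψy_le : ψ y ≤ (t + 1) * log 2 := by
    have hv' := hinv ((t + 1) * log 2) (by positivity)
    simpa only [hv'.2] using hψ hy0.le hv'.1 hy.2
  have hκ_le : κ (v - ε) ≤ κ (y - ε) :=
    hκ (sub_pos.2 hεt) (sub_pos.2 (hεt.trans hy.1)) (by linarith [hy.1])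
  have harg : C₀ y + ε * r (y - ε) ≤ (t + 1 : ℕ) * log 2 + -κ (v - ε) := by
    have := mul_le_sub_of_hasDerivAt_of_monotoneOn hκ' hr hε (sub_pos.2 (hεt.trans hy.1))
    push_cast
    linarith [hC₀ y hy0]
  have hexp : C / 2 * exp (C₀ y + ε * r (y - ε)) ≤ C * 2 ^ t * exp (-κ (v - ε)) := by
    calc C / 2 * exp (C₀ y + ε * r (y - ε))
        ≤ C / 2 * exp ((t + 1 : ℕ) * log 2 + -κ (v - ε)) := by gcongr
      _ = C * 2 ^ t * exp (-κ (v - ε)) := by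
        rw [exp_add, exp_natCast_mul_log _ two_pos, pow_succ]; ring
  have hmain : 2 ^ t * exp (-(C * 2 ^ t * exp (-κ (v - ε)))) ≤
      exp (ψ y - C / 2 * exp (C₀ y + ε * r (y - ε))) := by
    have h2t : (2 : ℝ) ^ t * exp (-(C * 2 ^ t * exp (-κ (v - ε)))) =
        exp (t * log 2 + -(C * 2 ^ t * exp (-κ (v - ε)))) := by
      rw [exp_add, exp_natCast_mul_log _ two_pos]
    rw [h2t]
    gcongr
    linarith
  have ht2 : (t + 1 : ℝ) ≤ 2 * t * 2 ^ t := by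
    have : (1 : ℝ) ≤ t := by exact_mod_cast ht
    nlinarith [one_le_pow₀ (M₀ := ℝ) (n := t) one_le_two]
  calc (t + 1) * exp (-(C * 2 ^ t * exp (-κ (v - ε))))
      ≤ 2 / log 2 * (t * log 2) * (2 ^ t * exp (-(C * 2 ^ t * exp (-κ (v - ε))))) := by
        rw [show 2 / log 2 * (t * log 2) = 2 * t by field_simp, ← mul_assoc]
        gcongr
    _ ≤ 2 / log 2 * (ψ y * exp (ψ y - C / 2 * exp (C₀ y + ε * r (y - ε)))) := by
        rw [mul_assoc]
        have : 0 ≤ (t : ℝ) * log 2 := by positivity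
        gcongr
        linarith

theorem ofReal_succ_mul_exp_le_setLIntegral {ψ ψinv q κ r C₀ : ℝ → ℝ} {C ε : ℝ}
    (hq : MonotoneOn q (Ici 0)) (hq₀ : ∀ x, 0 ≤ x → 0 ≤ q x)
    (hψq : ∀ x, 0 ≤ x → ψ x = ∫ t in (0 : ℝ)..x, q t)
    (hinv : ∀ x, 0 ≤ x → 0 ≤ ψinv x ∧ ψ (ψinv x) = x)
    (hκ : MonotoneOn κ (Ioi 0)) (hκ' : ∀ x, 0 < x → HasDerivAt κ (r x) x)
    (hr : MonotoneOn r (Ioi 0)) (hC₀ : ∀ x, 0 < x → C₀ x ≤ ψ x - κ x) (hC : 0 ≤ C)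
    (hε : 0 ≤ ε) {t : ℕ} (ht : 1 ≤ t) (hεt : ε < ψinv (t * log 2)) :
    ENNReal.ofReal ((t + 1) * exp (-(C * 2 ^ t * exp (-κ (ψinv (t * log 2) - ε))))) ≤
      ENNReal.ofReal (2 / log 2 ^ 2) *
        ∫⁻ y in Ioc (ψinv (t * log 2)) (ψinv ((t + 1) * log 2)),
          ENNReal.ofReal (ψ y * q y * exp (ψ y - C / 2 * exp (C₀ y + ε * r (y - ε)))) := by
  set G := (t + 1) * exp (-(C * 2 ^ t * exp (-κ (ψinv (t * log 2) - ε))))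
  have hlog2 : 0 < log 2 := log_pos one_lt_two
  have hψ := monotoneOn_primitive hq hψq hq₀
  have hv := hinv (t * log 2) (by positivity)
  have hv' := hinv ((t + 1) * log 2) (by positivity)
  have hvv' : ψinv (t * log 2) ≤ ψinv ((t + 1) * log 2) :=
    monotoneOn_of_rightInvOn hψ hinv (by positivity : (0 : ℝ) ≤ t * log 2)
      (by positivity : (0 : ℝ) ≤ (t + 1) * log 2) (by gcongr; linarith)
  have hq_block : ∫⁻ y in Ioc (ψinv (t * log 2)) (ψinv ((t + 1) * log 2)),
      ENNReal.ofReal (q y) = ENNReal.ofReal (log 2) := by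
    rw [lintegral_Ioc_ofReal_eq_primitive_sub hq hψq hq₀ hv.1 hvv', hv.2, hv'.2]
    ring_nf
  rw [← lintegral_const_mul' _ _ ENNReal.ofReal_ne_top]
  calc ENNReal.ofReal G = ENNReal.ofReal (log 2) * ENNReal.ofReal (G / log 2) := by
        rw [← ENNReal.ofReal_mul hlog2.le, mul_div_cancel₀ _ hlog2.ne']
    _ = ∫⁻ y in Ioc (ψinv (t * log 2)) (ψinv ((t + 1) * log 2)),
          ENNReal.ofReal (q y * (G / log 2)) := by
        rw [← hq_block, ← lintegral_mul_const' _ _ ENNReal.ofReal_ne_top]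
        refine setLIntegral_congr_fun measurableSet_Ioc fun y hy => ?_
        rw [ENNReal.ofReal_mul (hq₀ y (hv.1.trans hy.1.le))]
    _ ≤ _ := by
        refine setLIntegral_mono' measurableSet_Ioc fun y hy => ?_
        rw [← ENNReal.ofReal_mul (by positivity)]
        refine ENNReal.ofReal_le_ofReal ?_
        have hblock := succ_mul_exp_le_of_mem_Ioc hψ hinv hκ hκ' hr hC₀ hC hε ht hεt hy
        have hqy := hq₀ y (hv.1.trans hy.1.le)
        calc q y * (G / log 2) ≤ q y * (2 / log 2 * (ψ y * exp (ψ y - C / 2 *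
              exp (C₀ y + ε * r (y - ε)))) / log 2) := by gcongr
          _ = _ := by field_simp

theorem tsum_ofReal_succ_mul_exp_ne_top {ψ ψinv q κ r C₀ : ℝ → ℝ} {C ε A : ℝ}
    (hq : MonotoneOn q (Ici 0)) (hq₀ : ∀ x, 0 ≤ x → 0 ≤ q x)
    (hψq : ∀ x, 0 ≤ x → ψ x = ∫ t in (0 : ℝ)..x, q t)
    (hinv : ∀ x, 0 ≤ x → 0 ≤ ψinv x ∧ ψ (ψinv x) = x)
    (hκ : MonotoneOn κ (Ioi 0)) (hκ' : ∀ x, 0 < x → HasDerivAt κ (r x) x)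
    (hr : MonotoneOn r (Ioi 0)) (hC₀ : ∀ x, 0 < x → C₀ x ≤ ψ x - κ x) (hC : 0 ≤ C)
    (hε : 0 ≤ ε)
    (hint : ∫⁻ y in Ioi A, ENNReal.ofReal (ψ y * q y *
      exp (ψ y - C / 2 * exp (C₀ y + ε * r (y - ε)))) < ∞) :
    ∑' t : ℕ, ENNReal.ofReal ((t + 1) * exp (-(C * 2 ^ t * exp (-κ (ψinv (t * log 2) - ε)))))
      ≠ ∞ := by
  have hψ := monotoneOn_primitive hq hψq hq₀
  have hlog2 : 0 < log 2 := log_pos one_lt_two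
  have hv_mono : Monotone fun t : ℕ => ψinv (t * log 2) := fun s t hst =>
    monotoneOn_of_rightInvOn hψ hinv (by positivity : (0 : ℝ) ≤ s * log 2)
      (by positivity : (0 : ℝ) ≤ t * log 2) (by gcongr)
  have hv_top : Tendsto (fun t : ℕ => ψinv (t * log 2)) atTop atTop :=
    (tendsto_atTop_of_rightInvOn hψ hinv).comp
      (tendsto_natCast_atTop_atTop.atTop_mul_const hlog2)
  refine tsum_ne_top_of_le_setLIntegral_Ioc hv_mono (K := ENNReal.ofReal (2 / log 2 ^ 2))
    ENNReal.ofReal_ne_top (fun _ => ENNReal.ofReal_ne_top) ?_ (hv_top.eventually_ge_atTop A) hint.ne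
  filter_upwards [eventually_ge_atTop 1, hv_top.eventually_gt_atTop ε] with t ht hεt
  simpa only [Nat.cast_succ] using
    ofReal_succ_mul_exp_le_setLIntegral hq hq₀ hψq hinv hκ hκ' hr hC₀ hC hε ht hεt

theorem ae_eventually_sub_le_runMax_two_pow {Ω : Type*} [MeasurableSpace Ω] {P : Measure Ω}
    [IsFiniteMeasure P] {X : ℕ → ℕ → Ω → ℝ}
    (hindep : ProbabilityTheory.iIndepFun (fun p : ℕ × ℕ => X p.1 p.2) P) {ψinv κ : ℝ → ℝ}
    {C ε : ℝ} (htail : ∀ k n : ℕ, 1 ≤ k → 1 ≤ n → ∀ x : ℝ, 0 < x →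
      P {ω | X k n ω < x} ≤ ENNReal.ofReal (exp (-(C * exp (-κ x)))))
    (hψinv : Tendsto ψinv atTop atTop)
    (hsum : ∑' t : ℕ, ENNReal.ofReal ((t + 1) *
      exp (-(C * 2 ^ t * exp (-κ (ψinv (t * log 2) - ε))))) ≠ ∞) :
    ∀ᵐ ω ∂P, ∀ᶠ p : ℕ × ℕ in cofinite,
      ψinv ((p.1 + p.2 : ℕ) * log 2) - ε ≤ runMax X (2 ^ p.1) (2 ^ p.2) ω := by
  have hv := hψinv.comp (tendsto_natCast_atTop_atTop.atTop_mul_const (log_pos one_lt_two))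
  set G : ℕ → ℝ := fun t => exp (-(C * 2 ^ t * exp (-κ (ψinv (t * log 2) - ε))))
  set E : ℕ × ℕ → Set Ω := fun p =>
    {ω | runMax X (2 ^ p.1) (2 ^ p.2) ω < ψinv ((p.1 + p.2 : ℕ) * log 2) - ε}
  have hE : ∀ᶠ p in cofinite, P (E p) ≤ ENNReal.ofReal (G (p.1 + p.2)) := by
    filter_upwards [Nat.tendsto_add_cofinite_atTop.eventually (hv.eventually_gt_atTop ε)]
      with p (hp : ε < ψinv (((p.1 + p.2 : ℕ) : ℝ) * log 2))
    refine (measure_runMax_lt_le hindep _ _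
      fun k n hk _ hn _ => htail k n hk hn _ (sub_pos.2 hp)).trans_eq ?_
    rw [← ENNReal.ofReal_pow (exp_nonneg _), ← exp_nat_mul, ← pow_add]
    simp only [G, Nat.cast_pow, Nat.cast_ofNat]
    ring_nf
  have hsumG : ∑' p : ℕ × ℕ, ENNReal.ofReal (G (p.1 + p.2)) ≠ ∞ := by
    rw [ENNReal.tsum_prod_add_eq_tsum_succ_mul fun t => ENNReal.ofReal (G t)]
    convert hsum using 3 with t
    rw [ENNReal.ofReal_mul (by positivity), ENNReal.ofReal_add (by positivity) zero_le_one,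
      ENNReal.ofReal_natCast, ENNReal.ofReal_one]
  filter_upwards [ae_finite_setOfPred_mem (ENNReal.tsum_ne_top_of_eventually_le
    (fun p => measure_ne_top P (E p)) hE hsumG)] with ω hω
  exact eventually_cofinite.2 (hω.subset fun p hp => not_le.1 hp)

theorem log_natCast_mul_le_natLog_two (m j : ℕ) :
    log ((m * j : ℕ) : ℝ) ≤ (Nat.log 2 m + Nat.log 2 j : ℕ) * log 2 + 2 * log 2 := by
  rcases Nat.eq_zero_or_pos (m * j) with h | h
  · rw [h, Nat.cast_zero, log_zero]
    positivity
  have hmj : m * j < 2 ^ (Nat.log 2 m + Nat.log 2 j + 2) := by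
    calc m * j < 2 ^ (Nat.log 2 m + 1) * 2 ^ (Nat.log 2 j + 1) :=
          Nat.mul_lt_mul'' (Nat.lt_pow_succ_log_self one_lt_two m)
            (Nat.lt_pow_succ_log_self one_lt_two j)
      _ = 2 ^ (Nat.log 2 m + Nat.log 2 j + 2) := by rw [← pow_add]; ring_nf
  calc log ((m * j : ℕ) : ℝ) ≤ log ((2 ^ (Nat.log 2 m + Nat.log 2 j + 2) : ℕ) : ℝ) :=
        log_le_log (by exact_mod_cast h) (by exact_mod_cast hmj.le)
    _ = (Nat.log 2 m + Nat.log 2 j : ℕ) * log 2 + 2 * log 2 := by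
        rw [Nat.cast_pow, Nat.cast_ofNat, log_pow]
        push_cast
        ring

theorem rightInv_log_sub_runMax_le {Ω : Type*} {X : ℕ → ℕ → Ω → ℝ} {ψinv : ℝ → ℝ}
    (hψinv : MonotoneOn ψinv (Ici 0)) {m j : ℕ} (hm : 1 ≤ m) (hj : 1 ≤ j) (ω : Ω) :
    ψinv (log ((m * j : ℕ) : ℝ)) - runMax X m j ω ≤
      ψinv ((Nat.log 2 m + Nat.log 2 j : ℕ) * log 2 + 2 * log 2) -
        runMax X (2 ^ Nat.log 2 m) (2 ^ Nat.log 2 j) ω := by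
  have hrun : runMax X (2 ^ Nat.log 2 m) (2 ^ Nat.log 2 j) ω ≤ runMax X m j ω :=
    runMax_mono Nat.one_le_two_pow Nat.one_le_two_pow (Nat.pow_log_le_self 2 (by omega))
      (Nat.pow_log_le_self 2 (by omega)) ω
  have hmj : (1 : ℝ) ≤ ((m * j : ℕ) : ℝ) := by exact_mod_cast Nat.mul_le_mul hm hj
  have hlog := hψinv (log_nonneg hmj) (show (0 : ℝ) ≤ _ by positivity)
    (log_natCast_mul_le_natLog_two m j)
  linarith

theorem runMax_neg_part_tendsto_zero_of_tau_le_one_general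
    {Ω : Type*} [MeasurableSpace Ω] (P : Measure Ω) [IsProbabilityMeasure P]
    (φ ψ ψinv q : ℝ → ℝ) (hψ : IsYoungFenchel φ ψ)
    (hq_mono : MonotoneOn q (Set.Ici 0)) (hq_nonneg : ∀ x, 0 ≤ x → 0 ≤ q x)
    (hψq : ∀ x, 0 ≤ x → ψ x = ∫ t in (0:ℝ)..x, q t)
    (hψinv : ∀ x, 0 ≤ x → 0 ≤ ψinv x ∧ ψ (ψinv x) = x)
    (X : ℕ → ℕ → Ω → ℝ)
    (hindep : ProbabilityTheory.iIndepFun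
      (fun p : ℕ × ℕ => X p.1 p.2) P)
    (κ r : ℝ → ℝ) (hκ_mono : StrictMonoOn κ (Set.Ioi 0))
    (hκ_deriv : ∀ x, 0 < x → HasDerivAt κ (r x) x) (hr_mono : MonotoneOn r (Set.Ioi 0))
    (C₀ : ℝ → ℝ) (hC₀ : ∀ x, 0 < x → C₀ x ≤ ψ x - κ x)
    (C : ℝ) (hC : 0 < C)
    (htail : ∀ k n : ℕ, 1 ≤ k → 1 ≤ n → ∀ x : ℝ, 0 < x →
      P {ω | X k n ω < x} ≤ ENNReal.ofReal (Real.exp (-(C * Real.exp (-κ x)))))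
    (hint : ∃ A > (0:ℝ), ∃ ε₀ > (0:ℝ), ∀ ε : ℝ, 0 < ε → ε ≤ ε₀ →
      (∫⁻ y in Set.Ioi A, ENNReal.ofReal (Real.exp (-(C * y / 2) *
        Real.exp (-κ (ψinv (Real.log y) - ε)))) < ⊤)
      ∧ (∫⁻ y in Set.Ioi A, ENNReal.ofReal (ψ y * q y *
          Real.exp (ψ y - C / 2 * Real.exp (C₀ y + ε * r (y - ε)))) < ⊤)) :
    ∀ᵐ ω ∂P, TendstoMaxIdx
      (fun m j => max (-(runMax X m j ω - ψinv (Real.log ((m * j : ℕ) : ℝ)))) 0) 0 := by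
  obtain ⟨A, -, ε₀, hε₀, hint⟩ := hint
  have hlog2 : 0 < log 2 := log_pos one_lt_two
  have hψ_mono := monotoneOn_primitive hq_mono hψq hq_nonneg
  have hψinv_top := tendsto_atTop_of_rightInvOn hψ_mono hψinv
  have hq_top := tendsto_atTop_of_le_primitive hq_mono hψq fun x y => (hψ x).1 ⟨y, rfl⟩
  have hgap := tendsto_rightInvOn_add_sub hψ_mono hψinv hq_top
    (fun _ _ ha hab => mul_le_primitive_sub hq_mono hψq ha hab) (c := 2 * log 2) (by positivity)
  have hlevel : Tendsto (fun p : ℕ × ℕ => ((p.1 + p.2 : ℕ) : ℝ) * log 2) cofinite atTop :=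
    (tendsto_natCast_atTop_atTop.comp Nat.tendsto_add_cofinite_atTop).atTop_mul_const hlog2
  have hlow : ∀ᵐ ω ∂P, ∀ i : ℕ, ∀ᶠ p : ℕ × ℕ in cofinite, ψinv ((p.1 + p.2 : ℕ) * log 2) -
      min ε₀ (1 / (i + 1)) ≤ runMax X (2 ^ p.1) (2 ^ p.2) ω := by
    refine ae_all_iff.2 fun i => ae_eventually_sub_le_runMax_two_pow hindep htail hψinv_top ?_
    have hεi : 0 < min ε₀ (1 / (i + 1)) := lt_min hε₀ Nat.one_div_pos_of_nat
    exact tsum_ofReal_succ_mul_exp_ne_top hq_mono hq_nonneg hψq hψinv hκ_mono.monotoneOn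
      hκ_deriv hr_mono hC₀ hC.le hεi.le (hint _ hεi (min_le_left _ _)).2
  filter_upwards [hlow] with ω hω
  refine tendstoMaxIdx_of_eventually_cofinite fun δ hδ => ?_
  obtain ⟨i, hi⟩ := exists_nat_one_div_lt (half_pos hδ)
  filter_upwards [(Nat.tendsto_prodMap_log_cofinite one_lt_two).eventually
    ((hω i).and (hlevel.eventually (hgap.eventually (gt_mem_nhds (half_pos hδ)))))]
    with ⟨m, j⟩ ⟨hlow, hgap⟩ hm hj
  simp only [Prod.map_fst, Prod.map_snd] at hlow hgap hm hj ⊢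
  have hdyadic := rightInv_log_sub_runMax_le (X := X) (monotoneOn_of_rightInvOn hψ_mono hψinv)
    hm hj ω
  have hεi := min_le_right ε₀ (1 / ((i : ℝ) + 1))
  rw [sub_zero, abs_of_nonneg (le_max_right _ _)]
  exact max_lt (by linarith) hδ

/-- Corollary 2: for an independent double array of `φ`-subgaussian random
variables with `sup_{k,n} τ_φ(X_{k,n}) ≤ 1`, under the left-tail bound
`P(X_{k,n} < x) ≤ exp(-C exp(-κ(x)))` and two integral conditions,
`(max_{1≤k≤m,1≤n≤j} X_{k,n} - ψ⁻¹(ln(mj)))⁻ → 0` a.s. as `m ∨ j → ∞`. -/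
theorem runMax_neg_part_tendsto_zero_of_tau_le_one
    {Ω : Type*} [MeasurableSpace Ω] (P : Measure Ω) [IsProbabilityMeasure P]
    (φ ψ ψinv q : ℝ → ℝ) (hφ : IsOrliczN φ) (hψ : IsYoungFenchel φ ψ)
    (hq_mono : MonotoneOn q (Set.Ici 0)) (hq_nonneg : ∀ x, 0 ≤ x → 0 ≤ q x)
    (hψq : ∀ x, 0 ≤ x → ψ x = ∫ t in (0:ℝ)..x, q t)
    (hψinv : ∀ x, 0 ≤ x → 0 ≤ ψinv x ∧ ψ (ψinv x) = x)
    (X : ℕ → ℕ → Ω → ℝ)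
    (hsub : ∀ k n : ℕ, 1 ≤ k → 1 ≤ n → IsPhiSubGaussian φ P (X k n))
    (hτ : ∀ k n : ℕ, 1 ≤ k → 1 ≤ n → tauPhi φ P (X k n) ≤ 1)
    (hindep : ProbabilityTheory.iIndepFun
      (fun p : ℕ × ℕ => X p.1 p.2) P)
    (κ r : ℝ → ℝ) (hκ_pos : ∀ x, 0 < x → 0 < κ x) (hκ_mono : StrictMonoOn κ (Set.Ioi 0))
    (hκ_deriv : ∀ x, 0 < x → HasDerivAt κ (r x) x) (hr_mono : MonotoneOn r (Set.Ioi 0))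
    (C₀ : ℝ → ℝ) (hC₀ : ∀ x, 0 < x → C₀ x ≤ ψ x - κ x)
    (C : ℝ) (hC : 0 < C)
    (htail : ∀ k n : ℕ, 1 ≤ k → 1 ≤ n → ∀ x : ℝ, 0 < x →
      P {ω | X k n ω < x} ≤ ENNReal.ofReal (Real.exp (-(C * Real.exp (-κ x)))))
    (hint : ∃ A > (0:ℝ), ∃ ε₀ > (0:ℝ), ∀ ε : ℝ, 0 < ε → ε ≤ ε₀ →
      (∫⁻ y in Set.Ioi A, ENNReal.ofReal (Real.exp (-(C * y / 2) *
        Real.exp (-κ (ψinv (Real.log y) - ε)))) < ⊤)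
      ∧ (∫⁻ y in Set.Ioi A, ENNReal.ofReal (ψ y * q y *
          Real.exp (ψ y - C / 2 * Real.exp (C₀ y + ε * r (y - ε)))) < ⊤)) :
    ∀ᵐ ω ∂P, TendstoMaxIdx
      (fun m j => max (-(runMax X m j ω - ψinv (Real.log ((m * j : ℕ) : ℝ)))) 0) 0 :=
  runMax_neg_part_tendsto_zero_of_tau_le_one_general P φ ψ ψinv q hψ hq_mono hq_nonneg hψq hψinv X
    hindep κ r hκ_mono hκ_deriv hr_mono C₀ hC₀ C hC htail hint
end

section
/- Let {X_{k,n} : k,n ≥ 1} be a double array of φ-subgaussian random variables with τ_φ(X_{k,n}) > 0 for all k,n, let g : [0,∞) → (0,∞) be non-decreasing, and let a_{m,j} = g(ln(mj)) ψ^{−1}(ln(mj)). Let f : [1,∞) → ℝ satisfy g(ln(mj)) / τ_φ(X_{k,n}) ≥ f(mj/(kn)) ≥ 1 for all m,j ≥ 1, 1 ≤ k ≤ m, 1 ≤ n ≤ j, and suppose there is c₀ > 0 with f(x) ≥ c₀ for all x ≥ 1. Then for every α > 2 − c₀ it holds that Σ_{m=1}^∞ Σ_{j=1}^∞ (mj)^{−α}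 P(Y⁺_{m,j} > 0) < +∞. -/
open MeasureTheory Real Filter Set

/-! Chernoff's bound combined with the MGF estimate `E exp(tX) ≤ exp(φ(bt))` and optimised through
the Young–Fenchel transform gives `P(X > β b s) ≤ exp(-β ψ(s))` for `β ≥ 1` and `s ≥ 0`. Take
`s = ψ⁻¹(ln(mj))` and `1 < β < c₀`: the hypothesis on `f` makes the threshold
`g(ln(mj)) ψ⁻¹(ln(mj))` exceed `β τ_φ(X_{k,n}) s`, so each `X_{k,n}` exceeds it with probability at
most `(mj)^{-β}`, and the union bound over the `mj` variables gives `P(Y⁺_{m,j} > 0) ≤ (mj)^{1-β}`.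
Choosing `β` with `α + β - 1 > 1` bounds the double series by a product of two convergent
`p`-series; when `c₀ ≤ 1` already `α > 1` and the trivial bound `P ≤ 1` suffices. -/

lemma IsOrliczN.nonneg {φ : ℝ → ℝ} (hφ : IsOrliczN φ) (x : ℝ) : 0 ≤ φ x := by
  have h := hφ.convexOn.2 (mem_univ x) (mem_univ (-x)) (by norm_num : (0 : ℝ) ≤ 1 / 2)
    (by norm_num : (0 : ℝ) ≤ 1 / 2) (by norm_num)
  simp only [smul_eq_mul, hφ.even x] at h
  rw [show (1 / 2 : ℝ) * x + 1 / 2 * -x = 0 by ring, hφ.map_zero] at h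
  linarith

lemma IsYoungFenchel.exists_nonneg_lt {φ ψ : ℝ → ℝ} (hψ : IsYoungFenchel φ ψ)
    (hφ : Function.Even φ) {s r : ℝ} (hs : 0 ≤ s) (hr : r < ψ s) :
    ∃ y, 0 ≤ y ∧ r < s * y - φ y := by
  obtain ⟨_, ⟨y, rfl⟩, hy⟩ := (lt_isLUB_iff (hψ s)).1 hr
  refine ⟨|y|, abs_nonneg y, hy.trans_le ?_⟩
  have hφy : φ |y| = φ y := by rcases abs_choice y with h | h <;> simp [h, hφ y]
  rw [hφy]
  gcongr
  exact le_abs_self y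

section Tail

variable {Ω : Type*} [MeasurableSpace Ω] {P : Measure Ω} [IsFiniteMeasure P]
  {φ ψ : ℝ → ℝ} {X : Ω → ℝ}

open ProbabilityTheory in
lemma measure_lt_le_ofReal_exp_of_phiMGF {b : ℝ} (hX : PhiMGF φ P X b) (x : ℝ) {y : ℝ}
    (hy : 0 ≤ y) : P {ω | x < X ω} ≤ ENNReal.ofReal (exp (φ y - x / b * y)) := by
  obtain ⟨hb, hmgf⟩ := hX
  obtain ⟨hint, hbound⟩ := hmgf (y / b)
  have hchernoff := measure_ge_le_exp_mul_mgf x (div_nonneg hy hb.le) hint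
  calc P {ω | x < X ω} ≤ P {ω | x ≤ X ω} := measure_mono fun _ hω => le_of_lt (α := ℝ) hω
    _ = ENNReal.ofReal (P.real {ω | x ≤ X ω}) := (ofReal_measureReal (measure_ne_top _ _)).symm
    _ ≤ ENNReal.ofReal (exp (φ y - x / b * y)) := by
      refine ENNReal.ofReal_le_ofReal (hchernoff.trans ?_)
      rw [show φ y - x / b * y = -(y / b) * x + φ (b * (y / b)) by field_simp; ring, exp_add]
      gcongr
      exact hbound

lemma measure_lt_le_ofReal_exp_neg_psi_of_phiMGF (hφ : IsOrliczN φ) (hψ : IsYoungFenchel φ ψ)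
    {b β s x : ℝ} (hX : PhiMGF φ P X b) (hβ : 1 ≤ β) (hs : 0 ≤ s) (hx : β * b * s ≤ x) :
    P {ω | x < X ω} ≤ ENNReal.ofReal (exp (-(β * ψ s))) := by
  have hbound : ∀ r < ψ s, P {ω | x < X ω} ≤ ENNReal.ofReal (exp (-(β * r))) := by
    intro r hr
    obtain ⟨y, hy, hry⟩ := hψ.exists_nonneg_lt hφ.even hs hr
    refine (measure_lt_le_ofReal_exp_of_phiMGF hX x hy).trans (ENNReal.ofReal_le_ofReal ?_)
    have hxb : β * s ≤ x / b := by rw [le_div_iff₀ hX.1]; linarith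
    have hφy : φ y ≤ β * φ y := le_mul_of_one_le_left (hφ.nonneg y) hβ
    gcongr
    linarith [mul_le_mul_of_nonneg_right hxb hy, mul_lt_mul_of_pos_left hry (by linarith : 0 < β)]
  have hcont : Tendsto (fun r => ENNReal.ofReal (exp (-(β * r)))) (nhdsWithin (ψ s) (Iio (ψ s)))
      (nhds (ENNReal.ofReal (exp (-(β * ψ s))))) :=
    ((ENNReal.continuous_ofReal.comp (by fun_prop)).tendsto _).mono_left nhdsWithin_le_nhds
  exact ge_of_tendsto hcont (eventually_nhdsWithin_of_forall hbound)

lemma measure_lt_le_ofReal_exp_neg_psi (hφ : IsOrliczN φ) (hψ : IsYoungFenchel φ ψ)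
    {β c s x : ℝ} (hX : IsPhiSubGaussian φ P X) (hβ : 1 ≤ β) (hs : 0 ≤ s)
    (hc : β * tauPhi φ P X < c) (hx : c * s ≤ x) :
    P {ω | x < X ω} ≤ ENNReal.ofReal (exp (-(β * ψ s))) := by
  have hβ0 : 0 < β := by linarith
  obtain ⟨b, hb, hbc⟩ := exists_lt_of_csInf_lt hX.2.2 (lt_div_iff₀' hβ0 |>.2 hc)
  refine measure_lt_le_ofReal_exp_neg_psi_of_phiMGF hφ hψ hb hβ hs (le_trans ?_ hx)
  rw [lt_div_iff₀' hβ0] at hbc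
  gcongr

end Tail

section RunMax

variable {Ω : Type*} {X : ℕ → ℕ → Ω → ℝ} {m j : ℕ}

lemma runMax_le (hm : 1 ≤ m) (hj : 1 ≤ j) {ω : Ω} {a : ℝ}
    (h : ∀ k n, 1 ≤ k → k ≤ m → 1 ≤ n → n ≤ j → X k n ω ≤ a) : runMax X m j ω ≤ a :=
  csSup_le ⟨X 1 1 ω, 1, 1, le_rfl, hm, le_rfl, hj, rfl⟩
    fun _ ⟨k, n, hk1, hkm, hn1, hnj, hy⟩ => hy ▸ h k n hk1 hkm hn1 hnj

lemma measure_lt_runMax_le [MeasurableSpace Ω] (μ : Measure Ω) (hm : 1 ≤ m) (hj : 1 ≤ j)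
    {a : ℝ} {ε : ENNReal}
    (h : ∀ k n, 1 ≤ k → k ≤ m → 1 ≤ n → n ≤ j → μ {ω | a < X k n ω} ≤ ε) :
    μ {ω | a < runMax X m j ω} ≤ (m * j : ℕ) * ε := by
  have hsubset : {ω | a < runMax X m j ω}
      ⊆ ⋃ k ∈ Finset.Icc 1 m, ⋃ n ∈ Finset.Icc 1 j, {ω | a < X k n ω} := by
    intro ω hω
    contrapose! hω
    simp only [mem_iUnion, Finset.mem_Icc, mem_ofPred_eq, not_exists, not_lt] at hω ⊢
    exact runMax_le hm hj fun k n hk1 hkm hn1 hnj => hω k ⟨hk1, hkm⟩ n ⟨hn1, hnj⟩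
  calc μ {ω | a < runMax X m j ω}
      ≤ ∑ k ∈ Finset.Icc 1 m, ∑ n ∈ Finset.Icc 1 j, μ {ω | a < X k n ω} :=
        (measure_mono hsubset).trans <| (measure_biUnion_finset_le _ _).trans <|
          Finset.sum_le_sum fun _ _ => measure_biUnion_finset_le _ _
    _ ≤ ∑ k ∈ Finset.Icc 1 m, ∑ n ∈ Finset.Icc 1 j, ε := by
        gcongr with k hk n hn
        rw [Finset.mem_Icc] at hk hn
        exact h k n hk.1 hk.2 hn.1 hn.2
    _ = (m * j : ℕ) * ε := by simp [mul_assoc]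

end RunMax

lemma tsum_tsum_ofReal_rpow_neg_lt_top {γ : ℝ} (hγ : 1 < γ) :
    ∑' m : ℕ, ∑' j : ℕ, ENNReal.ofReal ((((m + 1) * (j + 1) : ℕ) : ℝ) ^ (-γ)) < ⊤ := by
  have hsummable : Summable fun n : ℕ => ((n + 1 : ℕ) : ℝ) ^ (-γ) :=
    (summable_nat_add_iff 1).2 (Real.summable_nat_rpow.2 (by linarith))
  have hfinite : ∑' n : ℕ, ENNReal.ofReal (((n + 1 : ℕ) : ℝ) ^ (-γ)) < ⊤ := by
    rw [← ENNReal.ofReal_tsum_of_nonneg (fun _ => by positivity) hsummable]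
    exact ENNReal.ofReal_lt_top
  have hsplit : ∀ m j : ℕ, ENNReal.ofReal ((((m + 1) * (j + 1) : ℕ) : ℝ) ^ (-γ))
      = ENNReal.ofReal (((m + 1 : ℕ) : ℝ) ^ (-γ)) * ENNReal.ofReal (((j + 1 : ℕ) : ℝ) ^ (-γ)) := by
    intro m j
    rw [← ENNReal.ofReal_mul (by positivity), ← mul_rpow (by positivity) (by positivity),
      Nat.cast_mul]
  simp_rw [hsplit, ENNReal.tsum_mul_left, ENNReal.tsum_mul_right]
  exact ENNReal.mul_lt_top hfinite hfinite

section Summand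

variable {Ω : Type*} [MeasurableSpace Ω] {P : Measure Ω} {φ ψ : ℝ → ℝ}
  {X : ℕ → ℕ → Ω → ℝ} {m j : ℕ}

lemma measure_lt_runMax_le_rpow [IsFiniteMeasure P] (hφ : IsOrliczN φ)
    (hψ : IsYoungFenchel φ ψ) (hm : 1 ≤ m) (hj : 1 ≤ j) {β c s : ℝ} (hβ : 1 ≤ β) (hs : 0 ≤ s)
    (hψs : ψ s = log ((m * j : ℕ) : ℝ))
    (hX : ∀ k n, 1 ≤ k → k ≤ m → 1 ≤ n → n ≤ j →
      IsPhiSubGaussian φ P (X k n) ∧ β * tauPhi φ P (X k n) < c) :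
    P {ω | c * s < runMax X m j ω} ≤ ENNReal.ofReal (((m * j : ℕ) : ℝ) ^ (1 - β)) := by
  have hN : 0 < ((m * j : ℕ) : ℝ) := by norm_cast; positivity
  calc P {ω | c * s < runMax X m j ω}
      ≤ (m * j : ℕ) * ENNReal.ofReal (((m * j : ℕ) : ℝ) ^ (-β)) := by
        refine measure_lt_runMax_le P hm hj fun k n hk1 hkm hn1 hnj => ?_
        obtain ⟨hsub, hc⟩ := hX k n hk1 hkm hn1 hnj
        convert measure_lt_le_ofReal_exp_neg_psi hφ hψ hsub hβ hs hc le_rfl using 3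
        rw [rpow_def_of_pos hN, hψs, mul_neg, mul_comm]
    _ = ENNReal.ofReal (((m * j : ℕ) : ℝ) ^ (1 - β)) := by
        rw [← ENNReal.ofReal_natCast, ← ENNReal.ofReal_mul hN.le, sub_eq_add_neg,
          rpow_add hN, rpow_one]

lemma mul_tauPhi_lt_of_le_div {Y : Ω → ℝ} {G c₀ β : ℝ} (h1 : 1 ≤ G / tauPhi φ P Y)
    (hc₀ : c₀ ≤ G / tauPhi φ P Y) (hβ : β < c₀) : β * tauPhi φ P Y < G := by
  have hτ0 : 0 ≤ tauPhi φ P Y := Real.sInf_nonneg fun _ hb => hb.1.le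
  -- `1 ≤ G / τ` rules out `τ = 0`, where the division would be `0`.
  have hτ : 0 < tauPhi φ P Y := hτ0.lt_of_ne fun h => by rw [← h, div_zero] at h1; linarith
  calc β * tauPhi φ P Y < c₀ * tauPhi φ P Y := by gcongr
    _ ≤ G := (le_div_iff₀ hτ).1 hc₀

lemma measure_lt_runMax_le_rpow_of_lt [IsProbabilityMeasure P] (hφ : IsOrliczN φ)
    (hψ : IsYoungFenchel φ ψ) {ψinv g f : ℝ → ℝ} (hψinv : ∀ x, 0 ≤ x → 0 ≤ ψinv x ∧ ψ (ψinv x) = x)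
    (hsub : ∀ k n : ℕ, 1 ≤ k → 1 ≤ n → IsPhiSubGaussian φ P (X k n))
    (hf : ∀ m j k n : ℕ, 1 ≤ k → k ≤ m → 1 ≤ n → n ≤ j →
      1 ≤ f (((m * j : ℕ) : ℝ) / ((k * n : ℕ) : ℝ)) ∧
      f (((m * j : ℕ) : ℝ) / ((k * n : ℕ) : ℝ))
        ≤ g (Real.log ((m * j : ℕ) : ℝ)) / tauPhi φ P (X k n))
    {c₀ β : ℝ} (hfc₀ : ∀ x : ℝ, 1 ≤ x → c₀ ≤ f x) (hβ : β < c₀) (hm : 1 ≤ m) (hj : 1 ≤ j) :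
    P {ω | g (log ((m * j : ℕ) : ℝ)) * ψinv (log ((m * j : ℕ) : ℝ)) < runMax X m j ω}
      ≤ ENNReal.ofReal (((m * j : ℕ) : ℝ) ^ (1 - β)) := by
  have hN : (1 : ℝ) ≤ ((m * j : ℕ) : ℝ) := Nat.one_le_cast.2 (Nat.mul_le_mul hm hj)
  rcases le_or_gt β 1 with hβ1 | hβ1
  · exact prob_le_one.trans (ENNReal.one_le_ofReal.2 (one_le_rpow hN (by linarith)))
  obtain ⟨hs, hψs⟩ := hψinv _ (log_nonneg hN)
  refine measure_lt_runMax_le_rpow hφ hψ hm hj hβ1.le hs hψs fun k n hk1 hkm hn1 hnj => ?_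
  obtain ⟨hf1, hfg⟩ := hf m j k n hk1 hkm hn1 hnj
  have hratio : 1 ≤ ((m * j : ℕ) : ℝ) / ((k * n : ℕ) : ℝ) := by
    rw [one_le_div (by norm_cast; positivity)]
    exact_mod_cast Nat.mul_le_mul hkm hnj
  exact ⟨hsub k n hk1 hn1,
    mul_tauPhi_lt_of_le_div (hf1.trans hfg) ((hfc₀ _ hratio).trans hfg) hβ⟩

end Summand

theorem sum_prob_pos_part_lt_top_of_f_bounded_below_general
    {Ω : Type*} [MeasurableSpace Ω] (P : Measure Ω) [IsProbabilityMeasure P]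
    (φ ψ ψinv g : ℝ → ℝ) (hφ : IsOrliczN φ) (hψ : IsYoungFenchel φ ψ)
    (hψinv : ∀ x, 0 ≤ x → 0 ≤ ψinv x ∧ ψ (ψinv x) = x)
    (X : ℕ → ℕ → Ω → ℝ)
    (hsub : ∀ k n : ℕ, 1 ≤ k → 1 ≤ n → IsPhiSubGaussian φ P (X k n))
    (f : ℝ → ℝ)
    (hf : ∀ m j k n : ℕ, 1 ≤ k → k ≤ m → 1 ≤ n → n ≤ j →
      1 ≤ f (((m * j : ℕ) : ℝ) / ((k * n : ℕ) : ℝ)) ∧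
      f (((m * j : ℕ) : ℝ) / ((k * n : ℕ) : ℝ))
        ≤ g (Real.log ((m * j : ℕ) : ℝ)) / tauPhi φ P (X k n))
    (c₀ : ℝ) (hfc₀ : ∀ x : ℝ, 1 ≤ x → c₀ ≤ f x)
    (α : ℝ) (hα : 2 - c₀ < α) :
    (∑' m : ℕ, ∑' j : ℕ,
      ENNReal.ofReal (((((m + 1) * (j + 1) : ℕ)) : ℝ) ^ (-α)) *
        P {ω | 0 < max (runMax X (m + 1) (j + 1) ω
          - g (Real.log ((((m + 1) * (j + 1) : ℕ)) : ℝ))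
            * ψinv (Real.log ((((m + 1) * (j + 1) : ℕ)) : ℝ))) 0}) < ⊤ := by
  obtain ⟨β, hβ, hγ⟩ : ∃ β, β < c₀ ∧ 1 < α + β - 1 :=
    ⟨(c₀ + 2 - α) / 2, by linarith, by linarith⟩
  refine lt_of_le_of_lt (ENNReal.tsum_le_tsum fun m => ENNReal.tsum_le_tsum fun j => ?_)
    (tsum_tsum_ofReal_rpow_neg_lt_top hγ)
  have hN : (0 : ℝ) < (((m + 1) * (j + 1) : ℕ) : ℝ) := by positivity
  simp only [lt_max_iff, sub_pos, lt_irrefl, or_false]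
  calc _ ≤ ENNReal.ofReal ((((m + 1) * (j + 1) : ℕ) : ℝ) ^ (-α))
        * ENNReal.ofReal ((((m + 1) * (j + 1) : ℕ) : ℝ) ^ (1 - β)) := by
        gcongr
        exact measure_lt_runMax_le_rpow_of_lt hφ hψ hψinv hsub hf hfc₀ hβ
          (by omega) (by omega)
    _ = ENNReal.ofReal ((((m + 1) * (j + 1) : ℕ) : ℝ) ^ (-(α + β - 1))) := by
        rw [← ENNReal.ofReal_mul (by positivity), ← rpow_add hN]
        congr 2
        ring

/-- Corollary 3: if moreover `f(x) ≥ c₀ > 0` for all `x ≥ 1`, then for every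
`α > 2 - c₀` one has `Σ_{m,j} (mj)^{-α} P(Y⁺_{m,j} > 0) < ∞`. -/
theorem sum_prob_pos_part_lt_top_of_f_bounded_below
    {Ω : Type*} [MeasurableSpace Ω] (P : Measure Ω) [IsProbabilityMeasure P]
    (φ ψ ψinv g : ℝ → ℝ) (hφ : IsOrliczN φ) (hψ : IsYoungFenchel φ ψ)
    (hψinv : ∀ x, 0 ≤ x → 0 ≤ ψinv x ∧ ψ (ψinv x) = x)
    (hg_mono : MonotoneOn g (Set.Ici 0)) (hg_pos : ∀ x, 0 ≤ x → 0 < g x)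
    (X : ℕ → ℕ → Ω → ℝ)
    (hsub : ∀ k n : ℕ, 1 ≤ k → 1 ≤ n → IsPhiSubGaussian φ P (X k n))
    (hτpos : ∀ k n : ℕ, 1 ≤ k → 1 ≤ n → 0 < tauPhi φ P (X k n))
    (f : ℝ → ℝ)
    (hf : ∀ m j k n : ℕ, 1 ≤ k → k ≤ m → 1 ≤ n → n ≤ j →
      1 ≤ f (((m * j : ℕ) : ℝ) / ((k * n : ℕ) : ℝ)) ∧
      f (((m * j : ℕ) : ℝ) / ((k * n : ℕ) : ℝ))
        ≤ g (Real.log ((m * j : ℕ) : ℝ)) / tauPhi φ P (X k n))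
    (c₀ : ℝ) (hc₀ : 0 < c₀) (hfc₀ : ∀ x : ℝ, 1 ≤ x → c₀ ≤ f x)
    (α : ℝ) (hα : 2 - c₀ < α) :
    (∑' m : ℕ, ∑' j : ℕ,
      ENNReal.ofReal (((((m + 1) * (j + 1) : ℕ)) : ℝ) ^ (-α)) *
        P {ω | 0 < max (runMax X (m + 1) (j + 1) ω
          - g (Real.log ((((m + 1) * (j + 1) : ℕ)) : ℝ))
            * ψinv (Real.log ((((m + 1) * (j + 1) : ℕ)) : ℝ))) 0}) < ⊤ :=
  sum_prob_pos_part_lt_top_of_f_bounded_below_general P φ ψ ψinv g hφ hψ hψinv X hsub f hf c₀ hfc₀ α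
    hα
end

section
/- Let {X_{k,n} : k,n ≥ 1} be a double array of φ-subgaussian random variables with τ_φ(X_{k,n}) > 0 for all k,n, let g : [0,∞) → (0,∞) be non-decreasing, and let a_{m,j} = g(ln(mj)) ψ^{−1}(ln(mj)). Let f : [1,∞) → ℝ satisfy g(ln(mj)) / τ_φ(X_{k,n}) ≥ f(mj/(kn)) ≥ 1 for all m,j ≥ 1, 1 ≤ k ≤ m, 1 ≤ n ≤ j. Then for all m,j ≥ 1, P(Y⁺_{m,j} > 0) ≤ Σ_{k=1}^m Σ_{n=1}^j (mj)^{−f(mj/(kn))}. -/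
open MeasureTheory Real Filter Set

/-!
A union bound reduces the claim to the single tails `P(X_{k,n} > a_{m,j})`. For each of them
the Chernoff bound `P(X ≥ a) ≤ exp(φ(τ t) - t a)`, optimised over `t ≥ 0`, gives
`exp(-ψ(a / τ))`. Writing `u = ψ⁻¹(ln(mj))` and `F = f(mj/(kn))`, the hypothesis on `f` gives
`a_{m,j} / τ ≥ F u`, and since `φ ≥ 0` the transform `ψ` is monotone on `[0, ∞)` and satisfies
`ψ(F u) ≥ F ψ(u) = F ln(mj)` for `F ≥ 1`; hence each tail is at most `(mj)^{-F}`.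
-/

namespace IsOrliczN

variable {φ : ℝ → ℝ}

lemma nonneg_s12 (hφ : IsOrliczN φ) (y : ℝ) : 0 ≤ φ y := by
  have h : ∀ z, 0 ≤ z → 0 ≤ φ z := fun z hz => by
    simpa [hφ.map_zero] using hφ.strictMonoOn.monotoneOn (mem_Ici.2 le_rfl) (mem_Ici.2 hz) hz
  rcases le_total 0 y with hy | hy
  · exact h y hy
  · rw [← hφ.even]; exact h (-y) (neg_nonneg.2 hy)

lemma apply_abs (hφ : IsOrliczN φ) (y : ℝ) : φ |y| = φ y := by
  rcases abs_choice y with h | h <;> simp only [h, hφ.even]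

end IsOrliczN

namespace IsYoungFenchel

variable {φ ψ : ℝ → ℝ}

lemma apply_le_of_forall_nonneg (hφ : IsOrliczN φ) (hψ : IsYoungFenchel φ ψ) {x c : ℝ}
    (hx : 0 ≤ x) (h : ∀ s, 0 ≤ s → x * s - φ s ≤ c) : ψ x ≤ c := by
  refine (hψ x).2 ?_
  rintro _ ⟨s, rfl⟩
  calc x * s - φ s ≤ x * |s| - φ |s| := by
        rw [hφ.apply_abs]; gcongr; exact le_abs_self s
    _ ≤ c := h _ (abs_nonneg s)

lemma mul_le_apply (hφ : IsOrliczN φ) (hψ : IsYoungFenchel φ ψ) {c x y : ℝ} (hc : 1 ≤ c)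
    (hy : 0 ≤ y) (hxy : c * y ≤ x) : c * ψ y ≤ ψ x := by
  have hc₀ : 0 < c := by linarith
  rw [← le_div_iff₀' hc₀]
  refine hψ.apply_le_of_forall_nonneg hφ hy fun s hs => ?_
  rw [le_div_iff₀' hc₀]
  calc c * (y * s - φ s) ≤ x * s - φ s := by
        nlinarith [mul_le_mul_of_nonneg_right hxy hs, mul_le_mul_of_nonneg_right hc (hφ.nonneg_s12 s)]
    _ ≤ ψ x := (hψ x).1 ⟨s, rfl⟩

lemma le_exp_neg (hφ : IsOrliczN φ) (hψ : IsYoungFenchel φ ψ) {p x : ℝ} (hx : 0 ≤ x)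
    (hp : 0 ≤ p) (h : ∀ s, 0 ≤ s → p ≤ exp (φ s - x * s)) : p ≤ exp (-ψ x) := by
  rcases hp.eq_or_lt with rfl | hp
  · exact (exp_pos _).le
  have hψx : ψ x ≤ -log p := hψ.apply_le_of_forall_nonneg hφ hx fun s hs => by
    have := log_le_log hp (h s hs)
    rw [log_exp] at this
    linarith
  calc p = exp (log p) := (exp_log hp).symm
    _ ≤ exp (-ψ x) := exp_le_exp.2 (by linarith)

lemma exp_neg_le_rpow_neg (hφ : IsOrliczN φ) (hψ : IsYoungFenchel φ ψ) {N u F x : ℝ}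
    (hN : 0 < N) (hu : 0 ≤ u) (hψu : ψ u = log N) (hF : 1 ≤ F) (hx : F * u ≤ x) :
    exp (-ψ x) ≤ N ^ (-F) := by
  have h := hψ.mul_le_apply hφ hF hu hx
  rw [hψu] at h
  rw [rpow_def_of_pos hN]
  exact exp_le_exp.2 (by linarith)

end IsYoungFenchel

section Tail

variable {Ω : Type*} [MeasurableSpace Ω] {P : Measure Ω} [IsFiniteMeasure P] {φ : ℝ → ℝ}
  {X : Ω → ℝ}

lemma PhiMGF.measureReal_ge_le {b t : ℝ} (h : PhiMGF φ P X b) (ht : 0 ≤ t) (a : ℝ) :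
    P.real {ω | a ≤ X ω} ≤ exp (φ (b * t) - t * a) :=
  calc P.real {ω | a ≤ X ω} ≤ exp (-t * a) * ProbabilityTheory.mgf X P t :=
        ProbabilityTheory.measure_ge_le_exp_mul_mgf a ht (h.2 t).1
    _ ≤ exp (-t * a) * exp (φ (b * t)) := by gcongr; exact (h.2 t).2
    _ = exp (φ (b * t) - t * a) := by rw [← exp_add]; ring_nf

lemma measureReal_ge_le_tauPhi (hφ : Continuous φ) (hX : ∃ b, PhiMGF φ P X b) {t : ℝ}
    (ht : 0 ≤ t) (a : ℝ) :
    P.real {ω | a ≤ X ω} ≤ exp (φ (tauPhi φ P X * t) - t * a) := by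
  -- `τ_φ(X)` need not be admissible, but the bound is a closed condition on the constant.
  have hclosed : IsClosed {b | P.real {ω | a ≤ X ω} ≤ exp (φ (b * t) - t * a)} :=
    isClosed_le continuous_const (by fun_prop)
  exact closure_minimal (fun b hb => hb.measureReal_ge_le ht a) hclosed
    (csInf_mem_closure hX ⟨0, fun b hb => hb.1.le⟩)

lemma measureReal_gt_le_exp_neg {ψ : ℝ → ℝ} (hφ : IsOrliczN φ) (hψ : IsYoungFenchel φ ψ)
    (hX : ∃ b, PhiMGF φ P X b) (hτ : 0 < tauPhi φ P X) {a : ℝ} (ha : 0 ≤ a) :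
    P.real {ω | a < X ω} ≤ exp (-ψ (a / tauPhi φ P X)) := by
  set τ := tauPhi φ P X
  refine hψ.le_exp_neg hφ (div_nonneg ha hτ.le) measureReal_nonneg fun s hs => ?_
  calc P.real {ω | a < X ω} ≤ P.real {ω | a ≤ X ω} :=
        measureReal_mono fun ω (h : a < X ω) => h.le
    _ ≤ exp (φ (τ * (s / τ)) - s / τ * a) :=
        measureReal_ge_le_tauPhi hφ.continuous hX (div_nonneg hs hτ.le) a
    _ = exp (φ s - a / τ * s) := by
        rw [mul_div_cancel₀ s hτ.ne']; ring_nf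

end Tail

section RunMax

variable {Ω : Type*} {X : ℕ → ℕ → Ω → ℝ} {m j : ℕ}

lemma setOf_lt_runMax_subset (hm : 1 ≤ m) (hj : 1 ≤ j) (c : ℝ) :
    {ω | c < runMax X m j ω} ⊆
      ⋃ k ∈ Finset.Icc 1 m, ⋃ n ∈ Finset.Icc 1 j, {ω | c < X k n ω} := by
  intro ω (hω : c < runMax X m j ω)
  by_contra hc
  simp only [mem_iUnion, Finset.mem_Icc, mem_ofPred_eq, not_exists, not_lt] at hc
  refine hω.not_ge (csSup_le ⟨X 1 1 ω, 1, 1, le_rfl, hm, le_rfl, hj, rfl⟩ ?_)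
  rintro _ ⟨k, n, hk₁, hkm, hn₁, hnj, rfl⟩
  exact hc k ⟨hk₁, hkm⟩ n ⟨hn₁, hnj⟩

lemma measureReal_lt_runMax_le [MeasurableSpace Ω] (P : Measure Ω) [IsFiniteMeasure P]
    (hm : 1 ≤ m) (hj : 1 ≤ j) (c : ℝ) :
    P.real {ω | c < runMax X m j ω} ≤
      ∑ k ∈ Finset.Icc 1 m, ∑ n ∈ Finset.Icc 1 j, P.real {ω | c < X k n ω} :=
  (measureReal_mono (setOf_lt_runMax_subset hm hj c) (measure_ne_top P _)).trans <|
    (measureReal_biUnion_finset_le _ _).trans <|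
      Finset.sum_le_sum fun _ _ => measureReal_biUnion_finset_le _ _

end RunMax

theorem prob_pos_part_le_sum_general
    {Ω : Type*} [MeasurableSpace Ω] (P : Measure Ω) [IsProbabilityMeasure P]
    (φ ψ ψinv g : ℝ → ℝ) (hφ : IsOrliczN φ) (hψ : IsYoungFenchel φ ψ)
    (hψinv : ∀ x, 0 ≤ x → 0 ≤ ψinv x ∧ ψ (ψinv x) = x)
    (X : ℕ → ℕ → Ω → ℝ)
    (hsub : ∀ k n : ℕ, 1 ≤ k → 1 ≤ n → IsPhiSubGaussian φ P (X k n))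
    (hτpos : ∀ k n : ℕ, 1 ≤ k → 1 ≤ n → 0 < tauPhi φ P (X k n))
    (f : ℝ → ℝ)
    (hf : ∀ m j k n : ℕ, 1 ≤ k → k ≤ m → 1 ≤ n → n ≤ j →
      1 ≤ f (((m * j : ℕ) : ℝ) / ((k * n : ℕ) : ℝ)) ∧
      f (((m * j : ℕ) : ℝ) / ((k * n : ℕ) : ℝ))
        ≤ g (Real.log ((m * j : ℕ) : ℝ)) / tauPhi φ P (X k n)) :
    ∀ m j : ℕ, 1 ≤ m → 1 ≤ j →
      P {ω | 0 < max (runMax X m j ω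
          - g (Real.log ((m * j : ℕ) : ℝ)) * ψinv (Real.log ((m * j : ℕ) : ℝ))) 0}
        ≤ ENNReal.ofReal (∑ k ∈ Finset.Icc 1 m, ∑ n ∈ Finset.Icc 1 j,
            ((m * j : ℕ) : ℝ) ^ (-f (((m * j : ℕ) : ℝ) / ((k * n : ℕ) : ℝ)))) := by
  intro m j hm hj
  set N : ℝ := ((m * j : ℕ) : ℝ)
  have hN : 1 ≤ N := Nat.one_le_cast.2 (Nat.mul_pos hm hj)
  obtain ⟨hu, hψu⟩ := hψinv (log N) (log_nonneg hN)
  have hevent : {ω | 0 < max (runMax X m j ω - g (log N) * ψinv (log N)) 0} =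
      {ω | g (log N) * ψinv (log N) < runMax X m j ω} := by
    ext; simp
  rw [hevent, ← ofReal_measureReal]
  refine ENNReal.ofReal_le_ofReal <| (measureReal_lt_runMax_le P hm hj _).trans <|
    Finset.sum_le_sum fun k hk => Finset.sum_le_sum fun n hn => ?_
  rw [Finset.mem_Icc] at hk hn
  have hτ := hτpos k n hk.1 hn.1
  obtain ⟨hF₁, hF₂⟩ := hf m j k n hk.1 hk.2 hn.1 hn.2
  have hg : 0 ≤ g (log N) := by
    have := (le_div_iff₀ hτ).1 (hF₁.trans hF₂); linarith
  have hFu : f (N / ((k * n : ℕ) : ℝ)) * ψinv (log N) ≤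
      g (log N) * ψinv (log N) / tauPhi φ P (X k n) := by
    rw [mul_div_right_comm]; gcongr
  exact (measureReal_gt_le_exp_neg hφ hψ (hsub k n hk.1 hn.1).2.2 hτ (by positivity)).trans
    (hψ.exp_neg_le_rpow_neg hφ (by linarith) hu hψu hF₁ hFu)

/-- under the assumptions of Theorem 4, for all `m, j ≥ 1`,
`P(Y⁺_{m,j} > 0) ≤ Σ_{k=1}^m Σ_{n=1}^j (mj)^{-f(mj/(kn))}`, where
`a_{m,j} = g(ln(mj)) ψ⁻¹(ln(mj))`. -/
theorem prob_pos_part_le_sum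
    {Ω : Type*} [MeasurableSpace Ω] (P : Measure Ω) [IsProbabilityMeasure P]
    (φ ψ ψinv g : ℝ → ℝ) (hφ : IsOrliczN φ) (hψ : IsYoungFenchel φ ψ)
    (hψinv : ∀ x, 0 ≤ x → 0 ≤ ψinv x ∧ ψ (ψinv x) = x)
    (hg_mono : MonotoneOn g (Set.Ici 0)) (hg_pos : ∀ x, 0 ≤ x → 0 < g x)
    (X : ℕ → ℕ → Ω → ℝ)
    (hsub : ∀ k n : ℕ, 1 ≤ k → 1 ≤ n → IsPhiSubGaussian φ P (X k n))
    (hτpos : ∀ k n : ℕ, 1 ≤ k → 1 ≤ n → 0 < tauPhi φ P (X k n))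
    (f : ℝ → ℝ)
    (hf : ∀ m j k n : ℕ, 1 ≤ k → k ≤ m → 1 ≤ n → n ≤ j →
      1 ≤ f (((m * j : ℕ) : ℝ) / ((k * n : ℕ) : ℝ)) ∧
      f (((m * j : ℕ) : ℝ) / ((k * n : ℕ) : ℝ))
        ≤ g (Real.log ((m * j : ℕ) : ℝ)) / tauPhi φ P (X k n)) :
    ∀ m j : ℕ, 1 ≤ m → 1 ≤ j →
      P {ω | 0 < max (runMax X m j ω
          - g (Real.log ((m * j : ℕ) : ℝ)) * ψinv (Real.log ((m * j : ℕ) : ℝ))) 0}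
        ≤ ENNReal.ofReal (∑ k ∈ Finset.Icc 1 m, ∑ n ∈ Finset.Icc 1 j,
            ((m * j : ℕ) : ℝ) ^ (-f (((m * j : ℕ) : ℝ) / ((k * n : ℕ) : ℝ)))) :=
  prob_pos_part_le_sum_general P φ ψ ψinv g hφ hψ hψinv X hsub hτpos f hf
end
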